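/- arXiv:2404.15554 — 2 statements merged into one kernel-verified Lean document; each statement's English description precedes it below -/
import Mathlib

section
/- Let ε ∈ [0,1], α ∈ [ε,1], and x ∈ ℝ. If X is a random variable taking value x - ε/α with probability α and value x with probability 1-α, then E[e^X] ≤ e^{x - ε/2}. -/
/-! Writing `t = ε / α ∈ [0, 1]`, the claim factors as `exp x * (α e^{-t} + 1 - α) ≤ exp x * e^{-ε/2}`.
The second-order bound `e^{-t} ≤ 1 - t + t²/2` gives `α e^{-t} + 1 - α ≤ 1 - ε + ε t / 2 ≤ 1 - ε / 2`,
and `1 - ε / 2 ≤ e^{-ε/2}`. -/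

open Real

theorem Real.exp_neg_le_one_sub_add_sq_div_two {t : ℝ} (ht : 0 ≤ t) :
    exp (-t) ≤ 1 - t + t ^ 2 / 2 := by
  rw [exp_neg, inv_le_iff_one_le_mul₀ (exp_pos t)]
  -- `(1 - t + t²/2) (1 + t + t²/2) = 1 + t⁴/4`
  calc (1 : ℝ) ≤ (1 - t + t ^ 2 / 2) * (1 + t + t ^ 2 / 2) := by nlinarith [pow_two_nonneg (t ^ 2)]
    _ ≤ (1 - t + t ^ 2 / 2) * exp t := by
      gcongr
      · nlinarith [sq_nonneg (t - 1)]
      · exact quadratic_le_exp_of_nonneg ht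

theorem Real.mul_exp_neg_add_one_sub_le_exp {α t : ℝ} (hα : 0 ≤ α) (ht0 : 0 ≤ t) (ht1 : t ≤ 1) :
    α * exp (-t) + (1 - α) ≤ exp (-(α * t / 2)) :=
  calc α * exp (-t) + (1 - α) ≤ α * (1 - t + t ^ 2 / 2) + (1 - α) := by
        gcongr; exact exp_neg_le_one_sub_add_sq_div_two ht0
    _ ≤ -(α * t / 2) + 1 := by nlinarith [mul_nonneg hα ht0]
    _ ≤ exp (-(α * t / 2)) := add_one_le_exp _

theorem stmt_1_general (ε α x : ℝ) (hε0 : 0 ≤ ε) (hα : ε ≤ α)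
    (hαpos : 0 < α) :
    α * Real.exp (x - ε / α) + (1 - α) * Real.exp x ≤ Real.exp (x - ε / 2) := by
  have hε : α * (ε / α) = ε := mul_div_cancel₀ ε hαpos.ne'
  have key := mul_exp_neg_add_one_sub_le_exp hαpos.le (div_nonneg hε0 hαpos.le)
    ((div_le_one hαpos).mpr hα)
  rw [hε] at key
  calc α * exp (x - ε / α) + (1 - α) * exp x = exp x * (α * exp (-(ε / α)) + (1 - α)) := by
        rw [sub_eq_add_neg, exp_add]; ring
    _ ≤ exp x * exp (-(ε / 2)) := by gcongr
    _ = exp (x - ε / 2) := by rw [← exp_add, sub_eq_add_neg]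

theorem stmt_1 (ε α x : ℝ) (hε0 : 0 ≤ ε) (hε1 : ε ≤ 1) (hα : ε ≤ α) (hα1 : α ≤ 1)
    (hαpos : 0 < α) :
    α * Real.exp (x - ε / α) + (1 - α) * Real.exp x ≤ Real.exp (x - ε / 2) :=
  stmt_1_general ε α x hε0 hα hαpos
end

section
/- Let h ≥ 1, p ≥ 0 be integers, c an integer with 0 ≤ c ≤ 2^p - 1, α = (2^p - c)/(h·2^p), and z ∈ ℝ. Let Z be a random variable equal to z + 1/(4h·2^p) - 1/(2h·2^p·α) with probability α, and equal to z + 1/(4h·2^p) with probability 1-α. Then E[e^Z] ≤ e^z. -/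
lemma exp_neg_le_quad {t : ℝ} (ht : 0 ≤ t) : Real.exp (-t) ≤ 1 - t + t ^ 2 := by
  have h1 : 1 + t ≤ Real.exp t := by have := Real.add_one_le_exp t; linarith
  have h2 : Real.exp (-t) ≤ 1 / (1 + t) := by
    rw [Real.exp_neg, inv_eq_one_div]
    exact one_div_le_one_div_of_le (by linarith) h1
  have h3 : 1 / (1 + t) ≤ 1 - t + t ^ 2 := by
    rw [div_le_iff₀ (by linarith)]
    nlinarith [pow_nonneg ht 3]
  linarith

theorem stmt_11 (h p : ℕ) (hh : 1 ≤ h) (c : ℕ) (hc : c ≤ 2 ^ p - 1)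
    (α : ℝ) (hα : α = ((2 : ℝ) ^ p - c) / (h * 2 ^ p)) (z : ℝ) :
    α * Real.exp (z + 1 / (4 * h * 2 ^ p) - 1 / (2 * h * 2 ^ p * α)) +
      (1 - α) * Real.exp (z + 1 / (4 * h * 2 ^ p)) ≤ Real.exp z := by
  have h2p : (0:ℝ) < 2 ^ p := by positivity
  have hhR : (1:ℝ) ≤ (h:ℝ) := by exact_mod_cast hh
  have hden : (0:ℝ) < (h:ℝ) * 2 ^ p := by positivity
  have hcR : (c:ℝ) ≤ (2:ℝ) ^ p - 1 := by
    have h1 : (1:ℕ) ≤ 2 ^ p := Nat.one_le_two_pow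
    have := (Nat.cast_le (α := ℝ)).2 hc
    rw [Nat.cast_sub h1] at this
    push_cast at this ⊢
    linarith
  have hnum : (1:ℝ) ≤ (2:ℝ) ^ p - c := by linarith
  set E : ℝ := 1 / (2 * (h:ℝ) * 2 ^ p) with hE
  have hEpos : 0 < E := by positivity
  have hα_pos : 0 < α := by rw [hα]; positivity
  have h2E : 2 * E ≤ α := by
    rw [hα, hE, le_div_iff₀ hden]
    have e : 2 * (1 / (2 * (h:ℝ) * 2 ^ p)) * ((h:ℝ) * 2 ^ p) = 1 := by field_simp
    rw [e]; exact hnum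
  -- rewrite the exponents
  have e1 : 1 / (4 * (h:ℝ) * 2 ^ p) = E / 2 := by
    rw [hE]; field_simp; ring
  have e2 : 1 / (2 * (h:ℝ) * 2 ^ p * α) = E / α := by
    rw [hE]; field_simp
  rw [e1, e2]
  set t : ℝ := E / α with hT
  have ht0 : 0 ≤ t := by positivity
  have hbound : α * Real.exp (-t) ≤ α - E / 2 := by
    have h1 : α * Real.exp (-t) ≤ α * (1 - t + t ^ 2) :=
      mul_le_mul_of_nonneg_left (exp_neg_le_quad ht0) hα_pos.le
    have h2 : α * (1 - t + t ^ 2) = α - E + E ^ 2 / α := by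
      rw [hT]; field_simp
    have h3 : E ^ 2 / α ≤ E / 2 := by
      rw [div_le_div_iff₀ hα_pos (by norm_num)]
      nlinarith
    linarith
  have key : α * Real.exp (-t) + (1 - α) ≤ Real.exp (-(E / 2)) := by
    have : (1 : ℝ) - E / 2 ≤ Real.exp (-(E/2)) := by
      have := Real.add_one_le_exp (-(E/2)); linarith
    linarith
  have expand : α * Real.exp (z + E / 2 - E / α) + (1 - α) * Real.exp (z + E / 2)
      = Real.exp z * Real.exp (E / 2) * (α * Real.exp (-t) + (1 - α)) := by
    rw [hT, show z + E / 2 - E / α = z + E / 2 + -(E / α) by ring,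
      Real.exp_add, Real.exp_add]
    ring
  rw [expand]
  calc Real.exp z * Real.exp (E / 2) * (α * Real.exp (-t) + (1 - α))
      ≤ Real.exp z * Real.exp (E / 2) * Real.exp (-(E / 2)) := by
        apply mul_le_mul_of_nonneg_left key (by positivity)
    _ = Real.exp z := by
        rw [mul_assoc, ← Real.exp_add]; simp
end
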